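/- For any n ≥ 1, ∑_{k=0}^n (-1)^k (η_k ⧢ δ_{k+1}) = 0 in the free F-module on words, where η_k = 12...k is the increasing word on {1,...,k}, δ_{k+1} = n(n-1)...(k+1) is the decreasing word on {k+1,...,n}, and η_k ⧢ δ_{k+1} denotes the formal sum of all shuffles of the two words. -/
import Mathlib

def shuffles {α : Type*} : List α → List α → Multiset (List α)
  | [], w => {w}
  | a :: v, [] => {a :: v}
  | a :: v, b :: w =>
      ((shuffles v (b :: w)).map (a :: ·)) + ((shuffles (a :: v) w).map (b :: ·))
  termination_by v w => v.length + w.length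
  decreasing_by all_goals (simp; try omega)

lemma shuffles_nil_left {α : Type*} (w : List α) : shuffles [] w = {w} := by
  simp [shuffles]

lemma shuffles_nil_right {α : Type*} (v : List α) : shuffles v [] = {v} := by
  cases v <;> simp [shuffles]

lemma shuffles_cons_cons {α : Type*} (a b : α) (v w : List α) :
    shuffles (a :: v) (b :: w) =
      ((shuffles v (b :: w)).map (a :: ·)) + ((shuffles (a :: v) w).map (b :: ·)) := by
  simp [shuffles]

lemma shuffles_concat_aux {α : Type*} : ∀ (N : ℕ) (u w : List α) (a b : α),
    u.length + w.length ≤ N →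
    shuffles (u ++ [a]) (w ++ [b]) =
      ((shuffles (u ++ [a]) w).map (· ++ [b])) + ((shuffles u (w ++ [b])).map (· ++ [a])) := by
  intro N
  induction N with
  | zero =>
    intro u w a b h
    have hu : u = [] := by cases u <;> simp_all
    have hw : w = [] := by cases w <;> simp_all
    subst hu; subst hw
    simp [shuffles_cons_cons, shuffles_nil_left, shuffles_nil_right]
  | succ N ih =>
    intro u w a b h
    match u, w with
    | [], [] =>
      simp [shuffles_cons_cons, shuffles_nil_left, shuffles_nil_right]
    | [], d :: w' =>
      have h1 : ([] : List α).length + w'.length ≤ N := by simp at h ⊢; omega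
      have e1 := ih [] w' a b h1
      simp only [List.nil_append] at e1 ⊢
      rw [show ((d :: w') ++ [b]) = d :: (w' ++ [b]) by simp]
      rw [shuffles_cons_cons a d [] (w' ++ [b]), shuffles_cons_cons a d [] w', e1]
      simp [shuffles_nil_left, Multiset.map_map, Function.comp]
    | c :: u', [] =>
      have h1 : u'.length + ([] : List α).length ≤ N := by simp at h ⊢; omega
      have e1 := ih u' [] a b h1
      simp only [List.nil_append] at e1 ⊢
      rw [show ((c :: u') ++ [a]) = c :: (u' ++ [a]) by simp]
      rw [shuffles_cons_cons c b (u' ++ [a]) [], shuffles_cons_cons c b u' [], e1]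
      simp [shuffles_nil_left, shuffles_nil_right, Multiset.map_map, Function.comp]
    | c :: u', d :: w' =>
      have h1 : u'.length + (d :: w').length ≤ N := by simp at h ⊢; omega
      have h2 : (c :: u').length + w'.length ≤ N := by simp at h ⊢; omega
      have e1 := ih u' (d :: w') a b h1
      have e2 := ih (c :: u') w' a b h2
      simp only [List.cons_append] at e1 e2 ⊢
      rw [shuffles_cons_cons c d (u' ++ [a]) (w' ++ [b]),
          shuffles_cons_cons c d (u' ++ [a]) w',
          shuffles_cons_cons c d u' (w' ++ [b]), e1, e2]
      simp [Multiset.map_map, Function.comp, List.cons_append]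
      abel

lemma shuffles_concat {α : Type*} (u w : List α) (a b : α) :
    shuffles (u ++ [a]) (w ++ [b]) =
      ((shuffles (u ++ [a]) w).map (· ++ [b])) + ((shuffles u (w ++ [b])).map (· ++ [a])) :=
  shuffles_concat_aux (u.length + w.length) u w a b le_rfl

lemma range'_eq_cons (s m : ℕ) (h : 0 < m) :
    List.range' s m = s :: List.range' (s + 1) (m - 1) := by
  obtain ⟨t, rfl⟩ : ∃ t, m = t + 1 := ⟨m - 1, by omega⟩
  rw [List.range'_succ]
  simp

lemma range'_eq_concat (s m : ℕ) (h : 0 < m) :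
    List.range' s m = List.range' s (m - 1) ++ [s + m - 1] := by
  obtain ⟨t, rfl⟩ : ∃ t, m = t + 1 := ⟨m - 1, by omega⟩
  rw [List.range'_concat]
  simp

/-- for any `n ≥ 1`, `∑_{k=0}^n (-1)^k (η_k ⧢ δ_{k+1}) = 0` in
the free module on words over a field `K`, where `η_k = 12⋯k` and
`δ_{k+1} = n(n-1)⋯(k+1)`, and `η_k ⧢ δ_{k+1}` is the formal sum of all
shuffles of the two words. -/
theorem shuffle_alternating_sum (K : Type) [Field K] (n : ℕ) (hn : 1 ≤ n) :
    (∑ k ∈ Finset.range (n + 1), ((-1 : ℤ) ^ k) •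
      ((shuffles (List.range' 1 k) ((List.range' (k + 1) (n - k)).reverse)).map
        (fun w => (Finsupp.single w (1 : K) : List ℕ →₀ K))).sum) = 0 := by
  classical
  set F : Multiset (List ℕ) → (List ℕ →₀ K) :=
    fun M => (M.map (fun w => (Finsupp.single w (1 : K) : List ℕ →₀ K))).sum with hF
  have hFadd : ∀ M N, F (M + N) = F M + F N := by
    intro M N; simp [hF]
  set B : ℕ → (List ℕ →₀ K) := fun k => if k < n then
      F ((shuffles (List.range' 1 k) ((List.range' (k + 2) (n - k - 1)).reverse)).map (· ++ [k + 1]))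
    else 0 with hB
  set d : ℕ → (List ℕ →₀ K) := fun k => if k = 0 then 0 else ((-1 : ℤ) ^ k) • B (k - 1) with hd
  have key : ∀ k ∈ Finset.range (n + 1),
      ((-1 : ℤ) ^ k) • F (shuffles (List.range' 1 k) ((List.range' (k + 1) (n - k)).reverse))
        = d k - d (k + 1) := by
    intro k hk
    simp only [Finset.mem_range] at hk
    have hkn : k ≤ n := by omega
    rcases Nat.eq_zero_or_pos k with rfl | hk1
    · -- k = 0
      simp only [pow_zero, one_smul, Nat.zero_add, Nat.sub_zero, zero_add]
      rw [show List.range' 1 0 = [] from rfl, shuffles_nil_left]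
      rw [range'_eq_cons 1 n hn, List.reverse_cons]
      simp [hd, hB, hF, shuffles_nil_left, show 0 < n by omega]
    · rcases eq_or_lt_of_le hkn with rfl | hklt
      · -- k = n
        rw [Nat.sub_self]
        simp only [List.range'_zero, List.reverse_nil, shuffles_nil_right]
        simp only [hd, hB, Nat.add_sub_cancel]
        rw [if_neg (by omega : ¬ (k = 0)), if_neg (by omega : ¬ (k + 1 = 0)),
            if_pos (by omega : k - 1 < k), if_neg (by omega : ¬ (k < k))]
        rw [show k - (k - 1) - 1 = 0 by omega]
        simp only [List.range'_zero, List.reverse_nil, shuffles_nil_right, smul_zero, sub_zero]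
        rw [show k - 1 + 1 = k by omega]
        rw [show List.range' 1 k = List.range' 1 (k - 1) ++ [k] by
          rw [range'_eq_concat 1 k hk1]; congr 1; simp]
        simp [hF]
      · -- 1 ≤ k < n
        have hs : List.range' 1 k = List.range' 1 (k - 1) ++ [k] := by
          rw [range'_eq_concat 1 k hk1]; congr 1; simp
        have ht : (List.range' (k + 1) (n - k)).reverse
            = (List.range' (k + 2) (n - k - 1)).reverse ++ [k + 1] := by
          rw [range'_eq_cons (k + 1) (n - k) (by omega), List.reverse_cons]
        rw [hs, ht, shuffles_concat, hFadd, ← hs, ← ht]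
        have hBk : B k = F ((shuffles (List.range' 1 k)
            ((List.range' (k + 2) (n - k - 1)).reverse)).map (· ++ [k + 1])) := by
          simp only [hB]; rw [if_pos hklt]
        have hBk1 : B (k - 1) = F ((shuffles (List.range' 1 (k - 1))
            ((List.range' (k + 1) (n - k)).reverse)).map (· ++ [k])) := by
          simp only [hB]
          rw [if_pos (by omega : k - 1 < n), show k - 1 + 2 = k + 1 by omega,
              show n - (k - 1) - 1 = n - k by omega, show k - 1 + 1 = k by omega]
        rw [← hBk, ← hBk1]
        simp only [hd]
        rw [if_neg (by omega : ¬ (k = 0)), if_neg (by omega : ¬ (k + 1 = 0))]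
        simp only [Nat.add_sub_cancel, pow_succ, mul_neg_one, neg_smul, sub_neg_eq_add, smul_add]
        abel
  rw [Finset.sum_congr rfl key, Finset.sum_range_sub' d]
  simp [hd, hB]
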